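/- Let p(s) = Σ_{k=0}^{m} a_k s^k be a symmetric trapezoidal polynomial with all a_k > 0 whose stable part has length l < n, where m ≥ n and [n] = 1 + s + ... + s^{n−1}. Then p(s)·[n] is a symmetric trapezoidal polynomial whose stable part has length 0 if m + n − 1 is even, and length 1 if m + n − 1 is odd. -/

import Mathlib

open Polynomial

/-- `qpoly n = 1 + s + ⋯ + s^(n-1)`, denoted `[n]` in the paper. -/
noncomputable def qpoly (n : ℕ) : Polynomial ℝ :=
  ∑ i ∈ Finset.range n, Polynomial.X ^ i

/-- All coefficients of `p` over its support `0, …, natDegree p` are positive. -/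
def PosCoeffs (p : Polynomial ℝ) : Prop :=
  ∀ k ≤ p.natDegree, 0 < p.coeff k

/-- `p` is symmetric: its coefficient sequence over its support reads the same
forwards and backwards. -/
def SymmetricPoly (p : Polynomial ℝ) : Prop :=
  ∀ k ≤ p.natDegree, p.coeff k = p.coeff (p.natDegree - k)

/-- `p` is trapezoidal: its coefficients strictly increase, then are constant,
then strictly decrease. -/
def Trapezoidal (p : Polynomial ℝ) : Prop :=
  ∃ i j : ℕ, i ≤ j ∧ j ≤ p.natDegree ∧
    (∀ k, k < i → p.coeff k < p.coeff (k + 1)) ∧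
    (∀ k, i ≤ k → k < j → p.coeff k = p.coeff (k + 1)) ∧
    (∀ k, j ≤ k → k < p.natDegree → p.coeff (k + 1) < p.coeff k)

/-- `p` has a run of `l + 1` equal consecutive coefficients within its support. -/
def HasRun (p : Polynomial ℝ) (l : ℕ) : Prop :=
  ∃ k0 : ℕ, k0 + l ≤ p.natDegree ∧ ∀ i ≤ l, p.coeff (k0 + i) = p.coeff k0

/-- The stable part of `p` has length `l`: `l` is the largest integer such that
some `l + 1` consecutive coefficients of `p` are all equal. -/
def StableLength (p : Polynomial ℝ) (l : ℕ) : Prop :=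
  HasRun p l ∧ ∀ l', HasRun p l' → l' ≤ l

/-!
Since `[n] (s - 1) = s^n - 1`, the coefficients `c_k` of `q = p [n]` satisfy
`c_{k+1} - c_k = a_{k+1} - a_{k+1-n}`. For `k + 1` below the middle of `q` this is positive:
either `k + 1 < n` and only `a_{k+1} > 0` remains, or the indices `k + 1 - n < k + 1` lie `n > l`
apart on the rising half of `p` (after reflecting `k + 1` if necessary), so they cannot both
sit on the plateau of `p`. Hence `q`, which is symmetric as a product of symmetric polynomials,
rises strictly up to its middle and falls strictly after it, and its plateau consists of the one
or two middle coefficients.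
-/

structure TrapezoidalWith (p : ℝ[X]) (i j : ℕ) : Prop where
  le : i ≤ j
  le_natDegree : j ≤ p.natDegree
  coeff_lt_succ : ∀ k < i, p.coeff k < p.coeff (k + 1)
  coeff_eq_succ : ∀ k, i ≤ k → k < j → p.coeff k = p.coeff (k + 1)
  coeff_succ_lt : ∀ k, j ≤ k → k < p.natDegree → p.coeff (k + 1) < p.coeff k

theorem trapezoidal_iff_exists_trapezoidalWith {p : ℝ[X]} :
    Trapezoidal p ↔ ∃ i j, TrapezoidalWith p i j :=
  ⟨fun ⟨i, j, h₁, h₂, h₃, h₄, h₅⟩ ↦ ⟨i, j, h₁, h₂, h₃, h₄, h₅⟩,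
    fun ⟨i, j, h⟩ ↦ ⟨i, j, h.1, h.2, h.3, h.4, h.5⟩⟩

namespace TrapezoidalWith

variable {p : ℝ[X]} {i j : ℕ}

theorem coeff_eq (h : TrapezoidalWith p i j) {k : ℕ} (hik : i ≤ k) (hkj : k ≤ j) :
    p.coeff k = p.coeff i := by
  induction k, hik using Nat.le_induction with
  | base => rfl
  | succ k hik ih => rw [← h.coeff_eq_succ k hik (by omega), ih (by omega)]

theorem monotoneOn_coeff (h : TrapezoidalWith p i j) : MonotoneOn p.coeff (Set.Iic j) :=
  monotoneOn_of_le_add_one Set.ordConnected_Iic fun k _ _ hk ↦ by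
    rcases lt_or_ge k i with hki | hik
    · exact (h.coeff_lt_succ k hki).le
    · exact (h.coeff_eq_succ k hik hk).le

theorem antitoneOn_coeff (h : TrapezoidalWith p i j) :
    AntitoneOn p.coeff (Set.Icc i p.natDegree) :=
  antitoneOn_of_add_one_le Set.ordConnected_Icc fun k _ hk hk' ↦ by
    rcases lt_or_ge k j with hkj | hjk
    · exact (h.coeff_eq_succ k hk.1 hkj).ge
    · exact (h.coeff_succ_lt k hjk hk'.2).le

theorem coeff_lt_coeff_of_lt_left (h : TrapezoidalWith p i j) {u v : ℕ} (huv : u < v)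
    (hu : u < i) (hv : v ≤ j) : p.coeff u < p.coeff v :=
  (h.coeff_lt_succ u hu).trans_le <| h.monotoneOn_coeff (by simp; omega) (by simpa) huv

theorem coeff_lt_coeff_of_lt_right (h : TrapezoidalWith p i j) {u v : ℕ} (huv : u < v)
    (hu : j ≤ u) (hv : v ≤ p.natDegree) : p.coeff v < p.coeff u :=
  have := h.le
  (h.antitoneOn_coeff (by simp; omega) (by simp; omega) huv).trans_lt <|
    h.coeff_succ_lt u hu (by omega)

theorem hasRun (h : TrapezoidalWith p i j) : HasRun p (j - i) :=
  have := h.le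
  ⟨i, by have := h.le_natDegree; omega, fun t ht ↦ h.coeff_eq (by omega) (by omega)⟩

theorem stableLength (h : TrapezoidalWith p i j) : StableLength p (j - i) := by
  refine ⟨h.hasRun, fun l ⟨k, hk, hrun⟩ ↦ ?_⟩
  by_contra! hl
  rcases lt_or_ge k i with hki | hik
  · exact (h.coeff_lt_succ k hki).ne' (hrun 1 (by omega))
  · -- the run `[k, k + l]` reaches past `j`, where the coefficients fall strictly
    have hlast := h.coeff_succ_lt (k + (l - 1)) (by omega) (by omega)
    rw [show k + (l - 1) + 1 = k + l by omega, hrun l le_rfl, hrun (l - 1) (by omega)] at hlast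
    exact hlast.false

theorem add_eq_natDegree (h : TrapezoidalWith p i j) (hsym : SymmetricPoly p) :
    i + j = p.natDegree := by
  have hle := h.le
  have hj := h.le_natDegree
  have hi : p.coeff (p.natDegree - i) = p.coeff i := by
    rw [hsym (p.natDegree - i) (by omega), Nat.sub_sub_self (by omega)]
  have hj' : p.coeff (p.natDegree - j) = p.coeff j := by
    rw [hsym (p.natDegree - j) (by omega), Nat.sub_sub_self hj]
  have hji : p.coeff j = p.coeff i := h.coeff_eq hle le_rfl
  by_contra hne
  rcases lt_or_gt_of_ne hne with hlt | hgt
  · exact (h.coeff_lt_coeff_of_lt_right (by omega) le_rfl (by omega)).ne (hi.trans hji.symm)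
  · exact (h.coeff_lt_coeff_of_lt_left (by omega) (by omega) le_rfl).ne hj'

end TrapezoidalWith

theorem symmetricPoly_iff_reflect {p : ℝ[X]} : SymmetricPoly p ↔ reflect p.natDegree p = p := by
  refine ⟨fun h ↦ ?_, fun h k hk ↦ ?_⟩
  · ext k
    rw [coeff_reflect]
    rcases le_or_gt k p.natDegree with hk | hk
    · rw [revAt_le hk, h k hk]
    · rw [revAt_eq_self_of_lt hk]
  · conv_lhs => rw [← h]
    rw [coeff_reflect, revAt_le hk]

theorem SymmetricPoly.mul {p q : ℝ[X]} (hp : SymmetricPoly p) (hq : SymmetricPoly q) :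
    SymmetricPoly (p * q) := by
  rcases eq_or_ne p 0 with rfl | hp0
  · simpa using hp
  rcases eq_or_ne q 0 with rfl | hq0
  · simpa using hq
  rw [symmetricPoly_iff_reflect] at *
  rw [natDegree_mul hp0 hq0, reflect_mul p q le_rfl le_rfl, hp, hq]

theorem SymmetricPoly.trapezoidalWith_half {q : ℝ[X]} (hsym : SymmetricPoly q)
    (hrise : ∀ k, 2 * k + 2 ≤ q.natDegree → q.coeff k < q.coeff (k + 1)) :
    TrapezoidalWith q (q.natDegree / 2) ((q.natDegree + 1) / 2) where
  le := by omega
  le_natDegree := by omega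
  coeff_lt_succ k hk := hrise k (by omega)
  coeff_eq_succ k hk hk' := by rw [hsym k (by omega), show q.natDegree - k = k + 1 by omega]
  coeff_succ_lt k hk hk' := by
    rw [hsym k hk'.le, hsym (k + 1) hk', show q.natDegree - k = q.natDegree - (k + 1) + 1 by omega]
    exact hrise _ (by omega)

/-- `u + v < natDegree p` says that `v` is closer to the middle than `u`. -/
theorem SymmetricPoly.coeff_lt_coeff_of_stableLength {p : ℝ[X]} {l : ℕ} (hsym : SymmetricPoly p)
    (htrap : Trapezoidal p) (hlen : StableLength p l) {u v : ℕ} (huv : u + l < v)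
    (hm : u + v < p.natDegree) : p.coeff u < p.coeff v := by
  obtain ⟨i, j, h⟩ := trapezoidal_iff_exists_trapezoidalWith.mp htrap
  have hsum := h.add_eq_natDegree hsym
  have hle := h.le
  have hplateau : j - i ≤ l := hlen.2 _ h.hasRun
  rcases le_or_gt v j with hvj | hjv
  · exact h.coeff_lt_coeff_of_lt_left (by omega) (by omega) hvj
  · rw [hsym v (by omega)]
    exact h.coeff_lt_coeff_of_lt_left (by omega) (by omega) (by omega)

theorem coeff_qpoly (n k : ℕ) : (qpoly n).coeff k = if k < n then 1 else 0 := by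
  simp [qpoly, coeff_X_pow]

theorem natDegree_qpoly (n : ℕ) : (qpoly n).natDegree = n - 1 := by
  refine le_antisymm (natDegree_sum_le_of_forall_le _ _ fun i hi ↦ ?_) ?_
  · simpa using Nat.le_sub_one_of_lt (Finset.mem_range.mp hi)
  · rcases Nat.eq_zero_or_pos n with rfl | hn
    · exact Nat.zero_le _
    · exact le_natDegree_of_ne_zero (by simp [coeff_qpoly, hn])

theorem qpoly_ne_zero {n : ℕ} (hn : 0 < n) : qpoly n ≠ 0 := fun h ↦ by
  simpa [coeff_qpoly, hn] using congrArg (coeff · 0) h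

theorem symmetricPoly_qpoly (n : ℕ) : SymmetricPoly (qpoly n) := fun k hk ↦ by
  rw [natDegree_qpoly] at hk ⊢
  simp only [coeff_qpoly, show k < n ↔ n - 1 - k < n by omega]

theorem qpoly_mul_X_sub_one (n : ℕ) : qpoly n * (X - 1) = X ^ n - 1 := by
  simpa [qpoly] using geom_sum_mul (X : ℝ[X]) n

theorem coeff_mul_qpoly_succ_sub_coeff (p : ℝ[X]) (n k : ℕ) :
    (p * qpoly n).coeff (k + 1) - (p * qpoly n).coeff k
      = p.coeff (k + 1) - if n ≤ k + 1 then p.coeff (k + 1 - n) else 0 := by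
  have h := congrArg (coeff · (k + 1)) (congrArg (p * ·) (qpoly_mul_X_sub_one n))
  simp only [← mul_assoc, mul_sub, mul_one, coeff_sub, coeff_mul_X, coeff_mul_X_pow'] at h
  linarith

theorem coeff_mul_qpoly_lt_coeff_succ {p : ℝ[X]} {n l k : ℕ} (hpos : PosCoeffs p)
    (hsym : SymmetricPoly p) (htrap : Trapezoidal p) (hlen : StableLength p l) (hln : l < n)
    (hnm : n ≤ p.natDegree) (hk : 2 * k + 3 ≤ p.natDegree + n) :
    (p * qpoly n).coeff k < (p * qpoly n).coeff (k + 1) := by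
  have hdiff := coeff_mul_qpoly_succ_sub_coeff p n k
  split_ifs at hdiff with hkn
  · have := hsym.coeff_lt_coeff_of_stableLength htrap hlen (u := k + 1 - n) (v := k + 1)
      (by omega) (by omega)
    linarith
  · have := hpos (k + 1) (by omega)
    linarith

theorem stableLength_mul_qpoly_of_lt_general (p : Polynomial ℝ) (m n l : ℕ)
    (hdeg : p.natDegree = m) (hmn : n ≤ m) (hln : l < n)
    (hpos : PosCoeffs p) (hsym : SymmetricPoly p) (htrap : Trapezoidal p)
    (hlen : StableLength p l) :
    SymmetricPoly (p * qpoly n) ∧ Trapezoidal (p * qpoly n) ∧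
      StableLength (p * qpoly n) (if Even (m + n - 1) then 0 else 1) := by
  subst hdeg
  have hp0 : p ≠ 0 := fun h ↦ by simpa [h] using hpos 0 (Nat.zero_le _)
  have hdeg_mul : (p * qpoly n).natDegree = p.natDegree + n - 1 := by
    rw [natDegree_mul hp0 (qpoly_ne_zero (by omega)), natDegree_qpoly]
    omega
  have hsym' := hsym.mul (symmetricPoly_qpoly n)
  have htrap' := hsym'.trapezoidalWith_half fun k hk ↦
    coeff_mul_qpoly_lt_coeff_succ hpos hsym htrap hlen hln hmn (by omega)
  refine ⟨hsym', trapezoidal_iff_exists_trapezoidalWith.mpr ⟨_, _, htrap'⟩, ?_⟩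
  convert htrap'.stableLength using 1
  rw [hdeg_mul]
  split_ifs <;> grind

theorem stableLength_mul_qpoly_of_lt (p : Polynomial ℝ) (m n l : ℕ)
    (hdeg : p.natDegree = m) (hn : 1 ≤ n) (hmn : n ≤ m) (hln : l < n)
    (hpos : PosCoeffs p) (hsym : SymmetricPoly p) (htrap : Trapezoidal p)
    (hlen : StableLength p l) :
    SymmetricPoly (p * qpoly n) ∧ Trapezoidal (p * qpoly n) ∧
      StableLength (p * qpoly n) (if Even (m + n - 1) then 0 else 1) :=
  stableLength_mul_qpoly_of_lt_general p m n l hdeg hmn hln hpos hsym htrap hlen
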